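/- arXiv:2407.05896 — 2 statements merged into one kernel-verified Lean document; each statement's English description precedes it below -/
import Mathlib

section
/- Let a ≥ 0 and 0 ≤ b ≤ b′. Then the covariance of the comonotonic Poisson pair with means a and b is at most that of the comonotonic Poisson pair with means a and b′: ∫ q_a(u)·q_b(u) dμ(u) − a·b ≤ ∫ q_a(u)·q_{b′}(u) dμ(u) − a·b′. In particular, for fixed a, the comonotonic Poisson covariance b ↦ cov(q_a(U), q_b(U)) is nondecreasing in b. -/
/-
Write `S_t(n) = P(X > n)` for `X ~ Poisson(t)`. By the layer-cake formula,
`E[q_a(U) q_b(U)] = ∑ₘ ∑ₙ min (S_a(m)) (S_b(n))`. Since `∑ₙ S_t(n) = t` and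
`min x s = x s + min (x (1 - s)) ((1 - x) s)`, the covariance equals `∑ₘ Ψ(S_a(m), Poisson(b))`
with `Ψ(x, μ) = ∑ₙ min (x μ[0, n]) ((1 - x) μ(n, ∞))`. For `0 < x ≤ 1`, `Ψ(x, μ)` is the least
expected pinball loss `E[(1 - x)(X - k)⁺ + x (k - X)⁺]` over integer locations `k`. Adding an
independent `ℕ`-valued summand cannot lower this minimum (condition on the summand and shift `k`),
and `Poisson(b') = Poisson(b' - b) ∗ Poisson(b)`.
-/
open MeasureTheory

/-- The uniform probability measure on the open interval (0,1):
Lebesgue measure restricted to (0,1). -/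
noncomputable def unif : Measure ℝ := volume.restrict (Set.Ioo (0 : ℝ) 1)

/-- The quantile transform of a cdf `F` on ℕ: `q_F(u) = min {n : u ≤ F n}`. -/
noncomputable def qt (F : ℕ → ℝ) (u : ℝ) : ℕ := sInf {n : ℕ | u ≤ F n}

/-- The Poisson(λ) cumulative distribution function on ℕ. -/
noncomputable def poisCdf (l : ℝ) (n : ℕ) : ℝ :=
  ∑ k ∈ Finset.range (n + 1), Real.exp (-l) * l ^ k / (Nat.factorial k)

/-- The Poisson(λ) probability mass function on ℕ. -/
noncomputable def poisPmf (l : ℝ) (n : ℕ) : ℝ :=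
  Real.exp (-l) * l ^ n / (Nat.factorial n)

/-- `F(n-1)` with the convention `F(-1) = 0`. -/
noncomputable def cdfm1 (F : ℕ → ℝ) (n : ℕ) : ℝ := if n = 0 then 0 else F (n - 1)

open ProbabilityTheory Set
open scoped ENNReal NNReal

lemma natCast_tsub_eq_tsum (n k : ℕ) :
    ((n - k : ℕ) : ℝ≥0∞) = ∑' m, if k ≤ m ∧ m < n then 1 else 0 := by
  rw [tsum_eq_sum (s := Finset.Ico k n) (fun m hm => if_neg (by simpa using hm))]
  simp [← Finset.mem_Ico]

lemma lintegral_natCast_tsub_const (μ : Measure ℕ) (k : ℕ) :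
    ∫⁻ n, ((n - k : ℕ) : ℝ≥0∞) ∂μ = ∑' m, if k ≤ m then μ (Ioi m) else 0 := by
  simp_rw [natCast_tsub_eq_tsum]
  rw [lintegral_tsum fun _ => .of_discrete]
  congr 1 with m
  split_ifs with hkm
  · rw [← lintegral_indicator_one measurableSet_Ioi]
    simp [hkm, indicator_apply]
  · simp [hkm]

lemma lintegral_const_tsub_natCast (μ : Measure ℕ) (k : ℕ) :
    ∫⁻ n, ((k - n : ℕ) : ℝ≥0∞) ∂μ = ∑' m, if m < k then μ (Iic m) else 0 := by
  simp_rw [natCast_tsub_eq_tsum]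
  rw [lintegral_tsum fun _ => .of_discrete]
  congr 1 with m
  split_ifs with hkm
  · rw [← lintegral_indicator_one measurableSet_Iic]
    simp [hkm, indicator_apply]
  · simp [hkm]

lemma lintegral_natCast_eq_tsum (μ : Measure ℕ) :
    ∫⁻ n, (n : ℝ≥0∞) ∂μ = ∑' m, μ (Ioi m) := by
  simpa using lintegral_natCast_tsub_const μ 0

lemma lintegral_natCast_mul_natCast {α : Type*} [MeasurableSpace α] (μ : Measure α)
    {f g : α → ℕ} (hf : Measurable f) (hg : Measurable g) :
    ∫⁻ a, (f a : ℝ≥0∞) * g a ∂μ = ∑' m, ∑' n, μ ({a | m < f a} ∩ {a | n < g a}) := by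
  have hset : ∀ m n, MeasurableSet ({a | m < f a} ∩ {a | n < g a}) := fun m n =>
    (hf measurableSet_Ioi).inter (hg measurableSet_Ioi)
  have hcount : ∀ k : ℕ, (k : ℝ≥0∞) = ∑' m, if m < k then 1 else 0 := fun k => by
    simpa using natCast_tsub_eq_tsum k 0
  have hprod : ∀ a, (f a : ℝ≥0∞) * g a
      = ∑' m, ∑' n, ({a | m < f a} ∩ {a | n < g a}).indicator 1 a := fun a => by
    rw [hcount (f a), hcount (g a), ← ENNReal.tsum_mul_right]
    congr 1 with m
    rw [← ENNReal.tsum_mul_left]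
    congr 1 with n
    by_cases hm : m < f a <;> by_cases hn : n < g a <;> simp [hm, hn]
  simp_rw [hprod]
  rw [lintegral_tsum fun m => (Measurable.tsum fun n =>
    measurable_one.indicator (hset m n)).aemeasurable]
  congr 1 with m
  rw [lintegral_tsum fun n => (measurable_one.indicator (hset m n)).aemeasurable]
  simp_rw [lintegral_indicator_one (hset _ _)]

lemma tendsto_measure_Ioi_atTop (μ : Measure ℕ) [IsFiniteMeasure μ] :
    Filter.Tendsto (fun m => μ (Ioi m)) Filter.atTop (nhds 0) := by
  have hempty : ⋂ m : ℕ, Ioi m = ∅ := eq_empty_of_forall_notMem fun n hn =>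
    lt_irrefl n (mem_iInter.1 hn n)
  simpa [Function.comp_def, hempty] using tendsto_measure_iInter_atTop (μ := μ)
    (fun _ => measurableSet_Ioi.nullMeasurableSet) antitone_Ioi ⟨0, measure_ne_top μ _⟩

lemma measure_Iic_eq_one_sub (μ : Measure ℕ) [IsProbabilityMeasure μ] (m : ℕ) :
    μ (Iic m) = 1 - μ (Ioi m) := by
  rw [← prob_compl_eq_one_sub measurableSet_Ioi, compl_Ioi]

lemma ENNReal.mul_one_sub_le_one_sub_mul {x p : ℝ≥0∞} (hxp : x ≤ p) (hp : p ≠ ∞) :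
    x * (1 - p) ≤ (1 - x) * p := by
  rw [ENNReal.mul_sub fun _ _ => ne_top_of_le_ne_top hp hxp,
    ENNReal.sub_mul fun _ _ => hp, mul_one, one_mul, mul_comm]
  exact tsub_le_tsub_right hxp _

lemma ENNReal.min_eq_mul_add_min {x p : ℝ≥0∞} (hx : x ≤ 1) (hp : p ≤ 1) :
    min x p = x * p + min (x * (1 - p)) ((1 - x) * p) := by
  have hx' : x ≠ ∞ := ne_top_of_le_ne_top one_ne_top hx
  have hp' : p ≠ ∞ := ne_top_of_le_ne_top one_ne_top hp
  rcases le_total x p with hxp | hpx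
  · rw [min_eq_left hxp, min_eq_left (ENNReal.mul_one_sub_le_one_sub_mul hxp hp'), ← mul_add,
      add_tsub_cancel_of_le hp, mul_one]
  · have h := ENNReal.mul_one_sub_le_one_sub_mul hpx hx'
    rw [mul_comm, mul_comm (1 - p)] at h
    rw [min_eq_right hpx, min_eq_right h, ← add_mul, add_tsub_cancel_of_le hx, one_mul]

/-- The expected pinball loss `(1 - x) (X - k)⁺ + x (k - X)⁺` of `X ~ μ` at the location `k`;
truncated subtraction on `ℕ` produces the positive parts. -/
noncomputable def pinballRisk (x : ℝ≥0∞) (μ : Measure ℕ) (k : ℕ) : ℝ≥0∞ :=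
  ∫⁻ n, (1 - x) * (n - k : ℕ) + x * (k - n : ℕ) ∂μ

/-- The least `pinballRisk x μ k` over all `k`, written termwise; it is attained when `x ≠ 0`
(`exists_pinballRisk_eq_minPinballRisk`). -/
noncomputable def minPinballRisk (x : ℝ≥0∞) (μ : Measure ℕ) : ℝ≥0∞ :=
  ∑' m, min (x * μ (Iic m)) ((1 - x) * μ (Ioi m))

lemma pinballRisk_eq_tsum (x : ℝ≥0∞) (μ : Measure ℕ) (k : ℕ) :
    pinballRisk x μ k = ∑' m, if m < k then x * μ (Iic m) else (1 - x) * μ (Ioi m) := by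
  rw [pinballRisk, lintegral_add_left (by fun_prop), lintegral_const_mul _ (by fun_prop),
    lintegral_const_mul _ (by fun_prop), lintegral_natCast_tsub_const,
    lintegral_const_tsub_natCast, ← ENNReal.tsum_mul_left, ← ENNReal.tsum_mul_left,
    ← ENNReal.tsum_add]
  congr 1 with m
  by_cases hmk : m < k
  · simp [hmk, not_le.2 hmk]
  · simp [hmk, not_lt.1 hmk]

lemma minPinballRisk_le_pinballRisk (x : ℝ≥0∞) (μ : Measure ℕ) (k : ℕ) :
    minPinballRisk x μ ≤ pinballRisk x μ k := by
  rw [pinballRisk_eq_tsum]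
  refine ENNReal.tsum_le_tsum fun m => ?_
  split_ifs
  · exact min_le_left _ _
  · exact min_le_right _ _

lemma exists_pinballRisk_eq_minPinballRisk {x : ℝ≥0∞} (μ : Measure ℕ) [IsProbabilityMeasure μ]
    (hx₀ : x ≠ 0) (hx₁ : x ≤ 1) : ∃ k, pinballRisk x μ k = minPinballRisk x μ := by
  have htail : ∃ k, μ (Ioi k) ≤ x :=
    ((tendsto_measure_Ioi_atTop μ).eventually_le_const (pos_iff_ne_zero.2 hx₀)).exists
  classical
  refine ⟨Nat.find htail, ?_⟩
  rw [pinballRisk_eq_tsum]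
  congr 1 with m
  rw [measure_Iic_eq_one_sub]
  split_ifs with hm
  · have hlt := not_le.1 (Nat.find_min htail hm)
    rw [min_eq_left (ENNReal.mul_one_sub_le_one_sub_mul hlt.le (by finiteness))]
  · have hle : μ (Ioi m) ≤ x :=
      (measure_mono (Ioi_subset_Ioi (not_lt.1 hm))).trans (Nat.find_spec htail)
    rw [min_eq_right]
    simpa only [mul_comm] using
      ENNReal.mul_one_sub_le_one_sub_mul hle (ne_top_of_le_ne_top ENNReal.one_ne_top hx₁)

/-- Conditioning on the independent summand `j`, the location `k` for `j + i` is no better than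
the location `k - j` for `i`. -/
lemma minPinballRisk_le_pinballRisk_conv (x : ℝ≥0∞) (μ ν : Measure ℕ) [IsProbabilityMeasure ν]
    (k : ℕ) : minPinballRisk x μ ≤ pinballRisk x (ν ∗ μ) k := by
  rw [pinballRisk, Measure.lintegral_conv .of_discrete]
  calc minPinballRisk x μ = ∫⁻ _, minPinballRisk x μ ∂ν := by simp
    _ ≤ ∫⁻ j, pinballRisk x μ (k - j) ∂ν :=
      lintegral_mono fun j => minPinballRisk_le_pinballRisk x μ (k - j)
    _ ≤ _ := by
      refine lintegral_mono fun j => lintegral_mono fun i => ?_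
      gcongr _ * ?_ + _ * ?_ <;> exact_mod_cast (by omega)

lemma minPinballRisk_le_minPinballRisk_conv {x : ℝ≥0∞} (hx : x ≤ 1) (μ ν : Measure ℕ)
    [IsProbabilityMeasure μ] [IsProbabilityMeasure ν] :
    minPinballRisk x μ ≤ minPinballRisk x (ν ∗ μ) := by
  rcases eq_or_ne x 0 with rfl | hx₀
  · simp [minPinballRisk]
  obtain ⟨k, hk⟩ := exists_pinballRisk_eq_minPinballRisk (ν ∗ μ) hx₀ hx
  exact hk ▸ minPinballRisk_le_pinballRisk_conv x μ ν k

lemma tsum_min_measure_Ioi (μ : Measure ℕ) [IsProbabilityMeasure μ] {x : ℝ≥0∞} (hx : x ≤ 1) :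
    ∑' n, min x (μ (Ioi n)) = x * ∑' n, μ (Ioi n) + minPinballRisk x μ := by
  rw [minPinballRisk, ← ENNReal.tsum_mul_left, ← ENNReal.tsum_add]
  congr 1 with n
  rw [measure_Iic_eq_one_sub, ENNReal.min_eq_mul_add_min hx prob_le_one]

lemma tsum_tsum_min_measure_Ioi (μ ν : Measure ℕ) [IsProbabilityMeasure μ]
    [IsProbabilityMeasure ν] :
    ∑' m, ∑' n, min (μ (Ioi m)) (ν (Ioi n))
      = (∑' m, μ (Ioi m)) * (∑' n, ν (Ioi n)) + ∑' m, minPinballRisk (μ (Ioi m)) ν := by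
  simp_rw [tsum_min_measure_Ioi ν prob_le_one]
  rw [ENNReal.tsum_add, ENNReal.tsum_mul_right]

lemma lt_qt_iff {F : ℕ → ℝ} (hF : Monotone F) {u : ℝ} (hu : ∃ n, u ≤ F n) (m : ℕ) :
    m < qt F u ↔ F m < u := by
  constructor
  · intro hm
    by_contra! hum
    exact (Nat.sInf_le hum).not_gt hm
  · intro hmu
    by_contra! hqm
    exact (hF hqm).not_gt (hmu.trans_le (Nat.sInf_mem hu))

lemma setOf_lt_qt {F : ℕ → ℝ} (hF : Monotone F) (m : ℕ) :
    {u | m < qt F u} = Ioi (F m) ∩ ⋃ n, Iic (F n) := by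
  ext u
  by_cases hu : ∃ n, u ≤ F n
  · simp [lt_qt_iff hF hu, hu]
  · have : {n | u ≤ F n} = ∅ := eq_empty_of_forall_notMem fun n hn => hu ⟨n, hn⟩
    simp_all [qt]

lemma measurable_qt {F : ℕ → ℝ} (hF : Monotone F) : Measurable (qt F) :=
  measurable_of_Ioi fun m => by
    change MeasurableSet {u | m < qt F u}
    rw [setOf_lt_qt hF m]
    exact measurableSet_Ioi.inter (.iUnion fun _ => measurableSet_Iic)

section Cdf

variable (μ : Measure ℕ) [IsProbabilityMeasure μ]

lemma monotone_measureReal_Iic : Monotone fun n => μ.real (Iic n) :=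
  fun _ _ h => measureReal_mono (Iic_subset_Iic.2 h)

lemma exists_le_measureReal_Iic {u : ℝ} (hu : u < 1) : ∃ n, u ≤ μ.real (Iic n) := by
  have := (ENNReal.tendsto_toReal (measure_ne_top μ univ)).comp (tendsto_measure_Iic_atTop μ)
  simp only [measure_univ, ENNReal.toReal_one] at this
  exact (this.eventually_const_le hu).exists

lemma lt_qt_measureReal_Iic_iff {u : ℝ} (hu : u < 1) (m : ℕ) :
    m < qt (fun k => μ.real (Iic k)) u ↔ μ.real (Iic m) < u :=
  lt_qt_iff (monotone_measureReal_Iic μ) (exists_le_measureReal_Iic μ hu) m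

lemma ofReal_one_sub_measureReal_Iic (n : ℕ) :
    ENNReal.ofReal (1 - μ.real (Iic n)) = μ (Ioi n) := by
  rw [← probReal_compl_eq_one_sub measurableSet_Iic, compl_Iic, ofReal_measureReal]

end Cdf

lemma unif_lt_qt_inter_lt_qt (μ ν : Measure ℕ) [IsProbabilityMeasure μ] [IsProbabilityMeasure ν]
    (m n : ℕ) :
    unif ({u | m < qt (fun k => μ.real (Iic k)) u} ∩ {u | n < qt (fun k => ν.real (Iic k)) u})
      = min (μ (Ioi m)) (ν (Ioi n)) := by
  have hset : {u | m < qt (fun k => μ.real (Iic k)) u} ∩ {u | n < qt (fun k => ν.real (Iic k)) u}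
      ∩ Ioo 0 1 = Ioo (max (μ.real (Iic m)) (ν.real (Iic n))) 1 := by
    ext u
    simp only [mem_inter_iff, mem_ofPred_eq, mem_Ioo, max_lt_iff]
    constructor
    · rintro ⟨⟨hm, hn⟩, -, hu⟩
      rw [lt_qt_measureReal_Iic_iff μ hu] at hm
      rw [lt_qt_measureReal_Iic_iff ν hu] at hn
      exact ⟨⟨hm, hn⟩, hu⟩
    · rintro ⟨⟨hm, hn⟩, hu⟩
      rw [lt_qt_measureReal_Iic_iff μ hu, lt_qt_measureReal_Iic_iff ν hu]
      exact ⟨⟨hm, hn⟩, measureReal_nonneg.trans_lt hm, hu⟩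
  rw [unif, Measure.restrict_apply' measurableSet_Ioo, hset, Real.volume_Ioo,
    ← min_sub_sub_left, ENNReal.ofReal_min, ofReal_one_sub_measureReal_Iic,
    ofReal_one_sub_measureReal_Iic]

lemma lintegral_qt_mul_qt (μ ν : Measure ℕ) [IsProbabilityMeasure μ] [IsProbabilityMeasure ν] :
    ∫⁻ u, (qt (fun k => μ.real (Iic k)) u : ℝ≥0∞) * qt (fun k => ν.real (Iic k)) u ∂unif
      = ∑' m, ∑' n, min (μ (Ioi m)) (ν (Ioi n)) := by
  simp_rw [lintegral_natCast_mul_natCast unif (measurable_qt (monotone_measureReal_Iic μ))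
    (measurable_qt (monotone_measureReal_Iic ν)), unif_lt_qt_inter_lt_qt]

section Poisson

open Real

lemma poisCdf_eq_measureReal_Iic (r : ℝ≥0) :
    poisCdf r = fun n => (poissonMeasure r).real (Iic n) := by
  ext n
  rw [← Finset.coe_Iic, ← sum_measureReal_singleton, ← Nat.range_succ_eq_Iic, poisCdf]
  simp [poissonMeasure_real_singleton]

lemma lintegral_ofReal_poissonMeasure {r : ℝ≥0} {f : ℕ → ℝ} (hf : 0 ≤ f) {s : ℝ}
    (hs : HasSum (fun n => f n * (exp (-r) * r ^ n / n.factorial)) s) :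
    ∫⁻ n, ENNReal.ofReal (f n) ∂poissonMeasure r = ENNReal.ofReal s := by
  simp_rw [lintegral_countable', poissonMeasure_singleton, ← ENNReal.ofReal_mul (hf _)]
  rw [← ENNReal.ofReal_tsum_of_nonneg (fun n => mul_nonneg (hf n) (by positivity)) hs.summable,
    hs.tsum_eq]

lemma lintegral_natCast_poissonMeasure (r : ℝ≥0) :
    ∫⁻ n, (n : ℝ≥0∞) ∂poissonMeasure r = r := by
  have hs : HasSum (fun n : ℕ => (n : ℝ) * (exp (-r) * r ^ n / n.factorial)) r := by
    rw [← hasSum_nat_add_iff' 1]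
    have := (hasSum_one_poissonMeasure r).mul_left (r : ℝ)
    simp only [mul_one, Finset.range_one, Finset.sum_singleton, CharP.cast_eq_zero, zero_mul,
      sub_zero] at this ⊢
    refine this.congr_fun fun n => ?_
    rw [Nat.factorial_succ, pow_succ]
    push_cast
    field_simp
  simpa using lintegral_ofReal_poissonMeasure (f := fun n => (n : ℝ)) (fun n => n.cast_nonneg) hs

lemma lintegral_pow_poissonMeasure (r c : ℝ≥0) :
    ∫⁻ n, (c : ℝ≥0∞) ^ n ∂poissonMeasure r = ENNReal.ofReal (exp ((c - 1) * r)) := by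
  have hs : HasSum (fun n : ℕ => (c : ℝ) ^ n * (exp (-r) * r ^ n / n.factorial))
      (exp ((c - 1) * r)) := by
    have := (hasSum_one_poissonMeasure (c * r)).mul_left (exp ((c - 1) * r))
    rw [mul_one] at this
    refine this.congr_fun fun n => ?_
    have hexp : exp (-r) = exp ((c - 1) * r) * exp (-(c * r)) := by
      rw [← exp_add]
      ring_nf
    push_cast
    rw [hexp]
    ring
  simpa using
    lintegral_ofReal_poissonMeasure (f := fun n => (c : ℝ) ^ n) (fun n => by positivity) hs

lemma poissonMeasure_Ioi_le (r : ℝ≥0) (m : ℕ) :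
    poissonMeasure r (Ioi m) ≤ ENNReal.ofReal (exp (3 * r)) * 4⁻¹ ^ m := by
  have hmarkov := meas_ge_le_lintegral_div (μ := poissonMeasure r) (f := fun n => (4 : ℝ≥0∞) ^ n)
    .of_discrete (ε := 4 ^ m) (by simp) (by simp)
  have hmgf := lintegral_pow_poissonMeasure r 4
  norm_num at hmgf
  rw [hmgf, div_eq_mul_inv, ENNReal.inv_pow] at hmarkov
  refine (measure_mono fun n (hn : m < n) => ?_).trans hmarkov
  exact pow_le_pow_right₀ (by norm_num : (1 : ℝ≥0∞) ≤ 4) hn.le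

lemma tsum_tsum_min_poissonMeasure_Ioi_ne_top (a b : ℝ≥0) :
    ∑' m, ∑' n, min (poissonMeasure a (Ioi m)) (poissonMeasure b (Ioi n)) ≠ ∞ := by
  set C := ENNReal.ofReal (exp (3 * a)) + ENNReal.ofReal (exp (3 * b))
  have hmin : ∀ m n, min (poissonMeasure a (Ioi m)) (poissonMeasure b (Ioi n))
      ≤ C * (2⁻¹ ^ m * 2⁻¹ ^ n) := by
    intro m n
    have h4 : (4⁻¹ : ℝ≥0∞) ^ max m n ≤ 2⁻¹ ^ m * 2⁻¹ ^ n := by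
      rw [show (4⁻¹ : ℝ≥0∞) = 2⁻¹ * 2⁻¹ by rw [← ENNReal.mul_inv (by simp) (by simp)]; norm_num,
        mul_pow]
      have h2 : (2⁻¹ : ℝ≥0∞) ≤ 1 := ENNReal.inv_le_one.2 one_le_two
      exact mul_le_mul' (pow_le_pow_of_le_one zero_le h2 (le_max_left m n))
        (pow_le_pow_of_le_one zero_le h2 (le_max_right m n))
    refine le_trans ?_ (mul_le_mul_right h4 C)
    rcases le_total m n with hmn | hnm
    · rw [max_eq_right hmn]
      refine (min_le_right _ _).trans ((poissonMeasure_Ioi_le b n).trans ?_)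
      gcongr
      exact le_add_self
    · rw [max_eq_left hnm]
      refine (min_le_left _ _).trans ((poissonMeasure_Ioi_le a m).trans ?_)
      gcongr
      exact le_self_add
  refine ne_top_of_le_ne_top ?_ (ENNReal.tsum_le_tsum fun m => ENNReal.tsum_le_tsum (hmin m))
  simp_rw [ENNReal.tsum_mul_left, ENNReal.tsum_mul_right, ENNReal.tsum_geometric,
    ENNReal.one_sub_inv_two, inv_inv]
  finiteness

lemma minPinballRisk_poissonMeasure_mono {x : ℝ≥0∞} (hx : x ≤ 1) {r r' : ℝ≥0} (hr : r ≤ r') :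
    minPinballRisk x (poissonMeasure r) ≤ minPinballRisk x (poissonMeasure r') := by
  rw [← tsub_add_cancel_of_le hr, ← poissonMeasure_conv_poissonMeasure]
  exact minPinballRisk_le_minPinballRisk_conv hx _ _

end Poisson

lemma tsum_minPinballRisk_poissonMeasure_ne_top (a c : ℝ≥0) :
    ∑' m, minPinballRisk (poissonMeasure a (Ioi m)) (poissonMeasure c) ≠ ∞ := by
  have h := tsum_tsum_min_poissonMeasure_Ioi_ne_top a c
  rw [tsum_tsum_min_measure_Ioi] at h
  exact (ENNReal.add_ne_top.1 h).2

lemma lintegral_qt_poisCdf_mul (a c : ℝ≥0) :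
    ∫⁻ u, (qt (poisCdf a) u : ℝ≥0∞) * qt (poisCdf c) u ∂unif
      = a * c + ∑' m, minPinballRisk (poissonMeasure a (Ioi m)) (poissonMeasure c) := by
  rw [poisCdf_eq_measureReal_Iic, poisCdf_eq_measureReal_Iic, lintegral_qt_mul_qt,
    tsum_tsum_min_measure_Ioi, ← lintegral_natCast_eq_tsum, ← lintegral_natCast_eq_tsum,
    lintegral_natCast_poissonMeasure, lintegral_natCast_poissonMeasure]

lemma integral_qt_poisCdf_mul_sub (a c : ℝ≥0) :
    ∫ u, (qt (poisCdf a) u : ℝ) * (qt (poisCdf c) u : ℝ) ∂unif - a * c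
      = (∑' m, minPinballRisk (poissonMeasure a (Ioi m)) (poissonMeasure c)).toReal := by
  have hmeas : ∀ r : ℝ≥0, Measurable fun u => (qt (poisCdf r) u : ℝ) := fun r => by
    rw [poisCdf_eq_measureReal_Iic]
    exact measurable_from_nat.comp (measurable_qt (monotone_measureReal_Iic _))
  rw [integral_eq_lintegral_of_nonneg_ae (ae_of_all _ fun u => by positivity)
    ((hmeas a).fun_mul (hmeas c)).aestronglyMeasurable]
  simp_rw [ENNReal.ofReal_mul (Nat.cast_nonneg _), ENNReal.ofReal_natCast]
  rw [lintegral_qt_poisCdf_mul, ENNReal.toReal_add (by finiteness)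
    (tsum_minPinballRisk_poissonMeasure_ne_top a c)]
  simp

/-- For fixed `a`, the comonotonic Poisson covariance `b ↦ cov(q_a(U), q_b(U))` is
nondecreasing in `b`. -/
theorem comonotonic_poisson_cov_mono (a b b' : ℝ) (ha : 0 ≤ a) (hb : 0 ≤ b) (hbb' : b ≤ b') :
    ∫ u, (qt (poisCdf a) u : ℝ) * (qt (poisCdf b) u : ℝ) ∂unif - a * b
      ≤ ∫ u, (qt (poisCdf a) u : ℝ) * (qt (poisCdf b') u : ℝ) ∂unif - a * b' := by
  lift a to ℝ≥0 using ha
  lift b' to ℝ≥0 using hb.trans hbb'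
  lift b to ℝ≥0 using hb
  rw [integral_qt_poisCdf_mul_sub, integral_qt_poisCdf_mul_sub]
  exact ENNReal.toReal_mono (tsum_minPinballRisk_poissonMeasure_ne_top a b')
    (ENNReal.tsum_le_tsum fun m =>
      minPinballRisk_poissonMeasure_mono prob_le_one (by exact_mod_cast hbb'))
end

section
/- In the MP_d(Λ,Ω) model, all pairwise covariances are nonnegative: for any indices 1 ≤ i < j ≤ d, E[X_i X_j] ≥ E[X_i]·E[X_j], where expectations are taken with respect to the product measure μ^d on (0,1)^d. That is, the model can only exhibit positive dependence. -/
open MeasureTheory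

/-- The product measure μ^d of the uniform measure on (0,1) over coordinates. -/
noncomputable def pmeas (d : ℕ) : Measure (Fin d → ℝ) := Measure.pi (fun _ => unif)

/-- Component `i` of the MP_d(Λ,Ω) vector: `X_i(u) = Σ_{j ≤ i} q_{ω_{ij} λ_i}(u_j)`. -/
noncomputable def mpX (d : ℕ) (lam : Fin d → ℝ) (om : Fin d → Fin d → ℝ)
    (i : Fin d) (u : Fin d → ℝ) : ℕ :=
  ∑ j ∈ Finset.Iic i, qt (poisCdf (om i j * lam i)) (u j)

/-!
Covariance is bilinear on square-integrable variables, so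
`cov(X_i, X_j) = ∑_{k ≤ i, m ≤ j} cov(Z_{ik}, Z_{jm})`. The terms with `k ≠ m` vanish because
`Z_{ik}` depends only on `u_k`, `Z_{jm}` only on `u_m`, and the coordinates are independent under
`μ^d`. For `k = m` both factors are nondecreasing functions of the same uniform variable `u_k`,
and Chebyshev's association inequality makes their covariance nonnegative: integrating
`(f x - f y) (g x - g y) ≥ 0` against `μ ⊗ μ` gives `2 cov(f, g)`. Square-integrability holds
because the quantile transform pushes `μ` forward to the Poisson law, which has all moments.
-/

open ProbabilityTheory
open scoped NNReal Nat

instance : IsProbabilityMeasure unif :=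
  ⟨by rw [unif, Measure.restrict_apply_univ, Real.volume_Ioo]; norm_num⟩

instance (d : ℕ) : IsProbabilityMeasure (pmeas d) := by
  unfold pmeas; infer_instance

section Quantile

variable {F : ℕ → ℝ} {u : ℝ} {n : ℕ}

lemma qt_le_of_le (h : u ≤ F n) : qt F u ≤ n := Nat.sInf_le h

lemma le_apply_qt (h : ∃ n, u ≤ F n) : u ≤ F (qt F u) := Nat.sInf_mem h

lemma qt_monotoneOn (hF : ∀ u < 1, ∃ n, u ≤ F n) : MonotoneOn (qt F) (Set.Iio 1) :=
  fun _ _ v hv huv => qt_le_of_le (huv.trans (le_apply_qt (hF v hv)))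

lemma aemeasurable_qt (hF : ∀ u < 1, ∃ n, u ≤ F n) : AEMeasurable (qt F) unif :=
  aemeasurable_restrict_of_monotoneOn measurableSet_Ioo
    ((qt_monotoneOn hF).mono fun _ hu => hu.2)

lemma qt_preimage_singleton_inter_subset (hF : ∀ u < 1, ∃ n, u ≤ F n) (n : ℕ) :
    qt F ⁻¹' {n} ∩ Set.Ioo 0 1 ⊆ Set.Ioc (cdfm1 F n) (F n) := by
  rintro u ⟨rfl, hu0, hu1⟩
  refine ⟨?_, le_apply_qt (hF u hu1)⟩
  unfold cdfm1
  split_ifs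
  · exact hu0
  · by_contra! hle
    have := qt_le_of_le hle
    omega

lemma unif_qt_preimage_singleton_le (hF : ∀ u < 1, ∃ n, u ≤ F n) (n : ℕ) :
    unif (qt F ⁻¹' {n}) ≤ ENNReal.ofReal (F n - cdfm1 F n) := by
  rw [unif, Measure.restrict_apply' measurableSet_Ioo, ← Real.volume_Ioc]
  exact measure_mono (qt_preimage_singleton_inter_subset hF n)

end Quantile

section Poisson

lemma hasSum_poisPmf (l : ℝ) : HasSum (poisPmf l) 1 := by
  have h := (NormedSpace.expSeries_div_hasSum_exp l).mul_left (Real.exp (-l))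
  rw [← Real.exp_eq_exp_ℝ, ← Real.exp_add, neg_add_cancel, Real.exp_zero] at h
  simp only [← mul_div_assoc] at h
  exact h

lemma exists_le_poisCdf (l : ℝ) : ∀ u < 1, ∃ n, u ≤ poisCdf l n := by
  intro u hu
  have := (hasSum_poisPmf l).tendsto_sum_nat.comp (Filter.tendsto_add_atTop_nat 1)
  obtain ⟨n, hn⟩ := (this.eventually (eventually_gt_nhds hu)).exists
  exact ⟨n, hn.le⟩

lemma poisCdf_sub_cdfm1 (l : ℝ) (n : ℕ) : poisCdf l n - cdfm1 (poisCdf l) n = poisPmf l n := by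
  cases n with
  | zero => simp [poisCdf, cdfm1, poisPmf]
  | succ n => simp [poisCdf, cdfm1, poisPmf, Finset.sum_range_succ _ (n + 1)]

lemma map_qt_poisCdf_unif (r : ℝ≥0) : unif.map (qt (poisCdf r)) = Po(r) := by
  have hmeas := aemeasurable_qt (exists_le_poisCdf r)
  have := Measure.isProbabilityMeasure_map hmeas
  -- both sides are probability measures, so comparing singletons from above suffices
  refine Measure.eq_of_le_of_isProbabilityMeasure (Measure.le_iff'.2 fun s => ?_)
  rw [← Measure.tsum_indicator_apply_singleton _ s .of_discrete,
    ← Measure.tsum_indicator_apply_singleton _ s .of_discrete]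
  refine ENNReal.tsum_le_tsum fun n => Set.indicator_le_indicator ?_
  rw [Measure.map_apply_of_aemeasurable hmeas .of_discrete, poissonMeasure_singleton]
  exact (unif_qt_preimage_singleton_le (exists_le_poisCdf r) n).trans_eq
    (by rw [poisCdf_sub_cdfm1]; rfl)

lemma memLp_two_natCast_poissonMeasure (r : ℝ≥0) : MemLp (fun n : ℕ => (n : ℝ)) 2 Po(r) := by
  rw [memLp_two_iff_integrable_sq .of_discrete, integrable_poissonMeasure_iff]
  refine .of_nonneg_of_le (fun n => by positivity) (fun n => ?_)
    ((Real.summable_pow_div_factorial (4 * r)).mul_left (Real.exp (-r)))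
  have hn : (n : ℝ) ^ 2 ≤ 4 ^ n := by
    calc (n : ℝ) ^ 2 ≤ ((2 : ℝ) ^ n) ^ 2 := by gcongr; exact_mod_cast Nat.lt_two_pow_self.le
      _ = 4 ^ n := by rw [← pow_mul, mul_comm, pow_mul]; norm_num
  rw [Real.norm_of_nonneg (by positivity), mul_pow, mul_div_assoc, mul_assoc]
  gcongr
  calc (r : ℝ) ^ n / n ! * n ^ 2 ≤ r ^ n / n ! * 4 ^ n := by gcongr
    _ = 4 ^ n * r ^ n / n ! := by ring

lemma memLp_qt_poisCdf (r : ℝ≥0) : MemLp (fun u => (qt (poisCdf r) u : ℝ)) 2 unif := by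
  have h := memLp_two_natCast_poissonMeasure r
  rw [← map_qt_poisCdf_unif] at h
  exact h.comp_of_map (aemeasurable_qt (exists_le_poisCdf r))

end Poisson

lemma covariance_nonneg_of_monovaryOn {α : Type*} [MeasurableSpace α] {μ : Measure α}
    [IsProbabilityMeasure μ] {f g : α → ℝ} {s : Set α} (hfg : MonovaryOn f g s)
    (hs : ∀ᵐ x ∂μ, x ∈ s) (hf : MemLp f 2 μ) (hg : MemLp g 2 μ) : 0 ≤ cov[f, g; μ] := by
  have hf₁ := hf.integrable one_le_two
  have hg₁ := hg.integrable one_le_two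
  have hfg₁ := hf.integrable_mul hg
  have hpos : 0 ≤ ∫ z, (f z.1 - f z.2) * (g z.1 - g z.2) ∂μ.prod μ := by
    refine integral_nonneg_of_ae ?_
    filter_upwards [Measure.quasiMeasurePreserving_fst.ae hs,
      Measure.quasiMeasurePreserving_snd.ae hs] with z h₁ h₂
    exact hfg.sub_mul_sub_nonneg h₂ h₁
  have hexpand : ∫ z, (f z.1 - f z.2) * (g z.1 - g z.2) ∂μ.prod μ = 2 * cov[f, g; μ] := by
    calc ∫ z, (f z.1 - f z.2) * (g z.1 - g z.2) ∂μ.prod μ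
        = ∫ z, ((f * g) z.1 + (f * g) z.2 - (f z.1 * g z.2 + g z.1 * f z.2)) ∂μ.prod μ := by
          congr with z; simp only [Pi.mul_apply]; ring
      _ = 2 * cov[f, g; μ] := by
          have hdiag : Integrable (fun z : α × α => (f * g) z.1 + (f * g) z.2) (μ.prod μ) :=
            (hfg₁.comp_fst μ).add (hfg₁.comp_snd μ)
          have hcross : Integrable (fun z : α × α => f z.1 * g z.2 + g z.1 * f z.2) (μ.prod μ) :=
            (hf₁.mul_prod hg₁).add (hg₁.mul_prod hf₁)
          rw [integral_sub hdiag hcross, integral_add (hfg₁.comp_fst μ) (hfg₁.comp_snd μ),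
            integral_add (hf₁.mul_prod hg₁) (hg₁.mul_prod hf₁), integral_fun_fst, integral_fun_snd,
            integral_prod_mul, integral_prod_mul, covariance_eq_sub hf hg]
          simp only [probReal_univ, one_smul]
          ring
  linarith

section Coordinates

variable {ι : Type*} [Fintype ι] {Ω : ι → Type*} [∀ i, MeasurableSpace (Ω i)]
  {μ : ∀ i, Measure (Ω i)} [∀ i, IsProbabilityMeasure (μ i)]

lemma covariance_comp_eval (k : ι) {f g : Ω k → ℝ} (hf : AEStronglyMeasurable f (μ k))
    (hg : AEStronglyMeasurable g (μ k)) :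
    cov[fun x => f (x k), fun x => g (x k); Measure.pi μ] = cov[f, g; μ k] := by
  have h := measurePreserving_eval μ k
  rw [← h.map_eq] at hf hg
  rw [← h.map_eq, covariance_map hf hg h.aemeasurable]
  rfl

lemma covariance_comp_eval_of_ne {k m : ι} (hkm : k ≠ m) {f : Ω k → ℝ} {g : Ω m → ℝ}
    (hf : MemLp f 2 (μ k)) (hg : MemLp g 2 (μ m)) :
    cov[fun x => f (x k), fun x => g (x m); Measure.pi μ] = 0 := by
  have hind := iIndepFun_pi (μ := μ) (X := fun _ => id) fun _ => aemeasurable_id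
  have hk := measurePreserving_eval μ k
  have hm := measurePreserving_eval μ m
  refine IndepFun.covariance_eq_zero ?_ (hf.comp_measurePreserving hk)
    (hg.comp_measurePreserving hm)
  exact (hind.indepFun hkm).comp₀ hk.aemeasurable hm.aemeasurable
    (hk.map_eq ▸ hf.aestronglyMeasurable.aemeasurable)
    (hm.map_eq ▸ hg.aestronglyMeasurable.aemeasurable)

end Coordinates

lemma covariance_qt_poisCdf_nonneg (a b : ℝ≥0) :
    0 ≤ cov[fun u => (qt (poisCdf a) u : ℝ), fun u => (qt (poisCdf b) u : ℝ); unif] := by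
  have hmono (r : ℝ≥0) : MonotoneOn (fun u => (qt (poisCdf r) u : ℝ)) (Set.Iio 1) :=
    Nat.mono_cast.comp_monotoneOn (qt_monotoneOn (exists_le_poisCdf r))
  exact covariance_nonneg_of_monovaryOn ((hmono a).monovaryOn (hmono b))
    (ae_restrict_of_forall_mem measurableSet_Ioo fun _ hu => hu.2)
    (memLp_qt_poisCdf a) (memLp_qt_poisCdf b)

/-- In the MP_d(Λ,Ω) model, all pairwise covariances are nonnegative: the model can only
exhibit positive dependence. -/
theorem mp_cov_nonneg (d : ℕ)
    (lam : Fin d → ℝ) (hlam : ∀ r, 0 < lam r)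
    (om : Fin d → Fin d → ℝ)
    (hom0 : ∀ r s : Fin d, s ≤ r → 0 ≤ om r s)
    (i j : Fin d) :
    (∫ u, (mpX d lam om i u : ℝ) ∂(pmeas d)) * (∫ u, (mpX d lam om j u : ℝ) ∂(pmeas d))
      ≤ ∫ u, (mpX d lam om i u : ℝ) * (mpX d lam om j u : ℝ) ∂(pmeas d) := by
  let rate (r s : Fin d) (hs : s ∈ Finset.Iic r) : ℝ≥0 :=
    ⟨om r s * lam r, mul_nonneg (hom0 r s (Finset.mem_Iic.1 hs)) (hlam r).le⟩
  let Z (r s : Fin d) (u : Fin d → ℝ) : ℝ := qt (poisCdf (om r s * lam r)) (u s)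
  have hZ : ∀ r, ∀ s ∈ Finset.Iic r, MemLp (Z r s) 2 (pmeas d) := fun r s hs =>
    (memLp_qt_poisCdf (rate r s hs)).comp_measurePreserving (measurePreserving_eval _ s)
  have hX : ∀ r, (fun u => (mpX d lam om r u : ℝ)) = fun u => ∑ s ∈ Finset.Iic r, Z r s u :=
    fun r => by ext u; push_cast [mpX]; rfl
  suffices 0 ≤ cov[fun u => (mpX d lam om i u : ℝ), fun u => (mpX d lam om j u : ℝ); pmeas d] by
    rw [covariance_eq_sub (hX i ▸ memLp_finsetSum _ (hZ i)) (hX j ▸ memLp_finsetSum _ (hZ j))]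
      at this
    exact sub_nonneg.1 this
  rw [hX i, hX j, covariance_fun_sum_fun_sum' (hZ i) (hZ j)]
  refine Finset.sum_nonneg fun k hk => Finset.sum_nonneg fun m hm => ?_
  rcases eq_or_ne k m with rfl | hkm
  · exact (covariance_qt_poisCdf_nonneg (rate i k hk) (rate j k hm)).trans_eq
      (covariance_comp_eval (μ := fun _ => unif) k (memLp_qt_poisCdf _).1
        (memLp_qt_poisCdf _).1).symm
  · exact (covariance_comp_eval_of_ne (μ := fun _ => unif) hkm (memLp_qt_poisCdf (rate i k hk))
      (memLp_qt_poisCdf (rate j m hm))).ge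
end
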